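/- Let p be a prime and n, m positive integers. For arbitrary integers a and r, ord_p( Σ_{k ≡ r mod (p-1)} s(n,k) S(k,m) a^k ) ≥ ord_p(n!) − ord_p(m!), where s(n,k) are the (signless) Stirling numbers of the first kind and S(k,m) the Stirling numbers of the second kind. -/

import Mathlib

open Nat
open Finset

/-- Unsigned Stirling numbers of the first kind: `stirling1 n k` is the number
of permutations of `n` elements with exactly `k` cycles, so that
`x(x+1)⋯(x+n-1) = Σ_k stirling1 n k * x^k`. -/
def stirling1 : ℕ → ℕ → ℕ
  | 0, 0 => 1
  | 0, _ + 1 => 0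
  | _ + 1, 0 => 0
  | n + 1, k + 1 => n * stirling1 n (k + 1) + stirling1 n k

/-- Stirling numbers of the second kind: `stirling2 n k` is the number of
partitions of an `n`-element set into `k` nonempty blocks. -/
def stirling2 : ℕ → ℕ → ℕ
  | 0, 0 => 1
  | 0, _ + 1 => 0
  | _ + 1, 0 => 0
  | n + 1, k + 1 => (k + 1) * stirling2 n (k + 1) + stirling2 n k

lemma stirling1_zero_right : ∀ n, 0 < n → stirling1 n 0 = 0
  | _ + 1, _ => rfl

lemma stirling1_eq_zero : ∀ {n k : ℕ}, n < k → stirling1 n k = 0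
  | 0, _ + 1, _ => rfl
  | n + 1, k + 1, h => by
    have h1 : n < k + 1 := by omega
    have h2 : n < k := by omega
    simp [stirling1, stirling1_eq_zero h1, stirling1_eq_zero h2]

lemma prod_eq_stirling1_sum {R : Type*} [CommRing R] (n : ℕ) (x : R) :
    ∏ i ∈ range n, (x + i) = ∑ k ∈ range (n + 1), (stirling1 n k : R) * x ^ k := by
  induction n with
  | zero => simp [stirling1]
  | succ n ih =>
    rw [Finset.prod_range_succ, ih]
    rw [Finset.sum_range_succ' (fun k => (stirling1 (n+1) k : R) * x ^ k) (n+1)]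
    have h0 : (stirling1 (n+1) 0 : R) * x ^ 0 = 0 := by
      simp [stirling1]
    rw [h0, add_zero]
    have hrec : ∀ k, (stirling1 (n+1) (k+1) : R) * x ^ (k+1)
        = (n : R) * stirling1 n (k+1) * x^(k+1) + (stirling1 n k : R) * x^(k+1) := by
      intro k
      show ((n * stirling1 n (k + 1) + stirling1 n k : ℕ) : R) * x ^ (k+1) = _
      push_cast; ring
    rw [Finset.sum_congr rfl (fun k _ => hrec k), Finset.sum_add_distrib]
    have key : ∑ k ∈ range (n+1), (n : R) * stirling1 n (k+1) * x^(k+1)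
        = (∑ k ∈ range (n+1), (stirling1 n k : R) * x ^ k) * n := by
      rw [Finset.sum_mul]
      rw [Finset.sum_range_succ' (fun k => (stirling1 n k : R) * x ^ k * n) n]
      rw [Finset.sum_range_succ (fun k => (n:R) * stirling1 n (k+1) * x^(k+1)) n]
      rw [stirling1_eq_zero (Nat.lt_succ_self n)]
      have : (stirling1 n 0 : R) * x ^ 0 * n = 0 := by
        rcases Nat.eq_zero_or_pos n with h | h
        · subst h; simp
        · rw [stirling1_zero_right n h]; simp
      rw [this, add_zero]
      simp [mul_comm, mul_assoc, mul_left_comm]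
    rw [mul_add, key, add_comm]
    congr 1
    rw [Finset.sum_mul]
    apply Finset.sum_congr rfl; intro k _; ring

lemma neg_one_pow_sub {m j : ℕ} (h : j ≤ m) : ((-1 : ℤ)) ^ (m - j) = (-1) ^ m * (-1) ^ j := by
  have h2 : ((-1:ℤ))^j * (-1)^j = 1 := by
    rw [← pow_add]; simp [pow_mul_comm, ← two_mul]
  calc ((-1:ℤ))^(m-j) = (-1)^(m-j) * ((-1)^j * (-1)^j) := by rw [h2, mul_one]
    _ = (-1)^((m-j)+j) * (-1)^j := by rw [← mul_assoc, ← pow_add]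
    _ = (-1)^m * (-1)^j := by rw [Nat.sub_add_cancel h]

lemma choose_mul_int (m j : ℕ) (h : j ≤ m + 1) :
    ((m+1).choose j : ℤ) * j = (m+1) * ((m+1).choose j) - (m+1) * (m.choose j) := by
  have h1 := Nat.choose_mul_succ_eq m j
  have h2 : ((m.choose j : ℤ)) * (m+1) = ((m+1).choose j : ℤ) * ((m+1 : ℕ) - (j:ℕ) : ℕ) := by
    exact_mod_cast congrArg (Nat.cast : ℕ → ℤ) h1
  rw [Nat.cast_sub h] at h2
  push_cast at h2 ⊢
  linarith [h2]

lemma factorial_mul_stirling2 (k m : ℕ) :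
    (m ! : ℤ) * stirling2 k m
      = ∑ j ∈ range (m + 1), (-1) ^ (m - j) * (m.choose j) * (j : ℤ) ^ k := by
  induction k generalizing m with
  | zero =>
    have hrefl := Finset.sum_range_reflect
      (fun j => ((-1:ℤ)) ^ (m - j) * (m.choose j) * (j:ℤ)^0) (m+1)
    have : ∑ j ∈ range (m+1), ((-1:ℤ)) ^ (m - j) * (m.choose j) * (j:ℤ)^0
        = ∑ j ∈ range (m+1), ((-1:ℤ))^j * (m.choose j) := by
      rw [← hrefl]
      apply Finset.sum_congr rfl
      intro j hj
      rw [Finset.mem_range] at hj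
      have hj' : j ≤ m := by omega
      simp only [pow_zero, mul_one, Nat.add_sub_cancel]
      rw [Nat.sub_sub_self hj', Nat.choose_symm hj']
    rw [this, Int.alternating_sum_range_choose]
    rcases Nat.eq_zero_or_pos m with h | h
    · subst h; simp [stirling2]
    · obtain ⟨m', rfl⟩ : ∃ m', m = m' + 1 := ⟨m - 1, by omega⟩
      simp [stirling2]
  | succ k ih =>
    rcases Nat.eq_zero_or_pos m with h | h
    · subst h; simp [stirling2]
    obtain ⟨m', rfl⟩ : ∃ m', m = m' + 1 := ⟨m - 1, by omega⟩
    have step1 : ∀ j ∈ range (m' + 2),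
        ((-1:ℤ)) ^ (m' + 1 - j) * ((m'+1).choose j) * (j : ℤ) ^ (k+1)
        = ((m':ℤ)+1) * ((-1) ^ (m' + 1 - j) * ((m'+1).choose j) * (j:ℤ)^k)
          - ((m':ℤ)+1) * ((-1) ^ (m' + 1 - j) * (m'.choose j) * (j:ℤ)^k) := by
      intro j hj
      rw [Finset.mem_range] at hj
      have hc := choose_mul_int m' j (by omega)
      calc ((-1:ℤ)) ^ (m' + 1 - j) * ((m'+1).choose j) * (j : ℤ) ^ (k+1)
          = ((-1:ℤ)) ^ (m' + 1 - j) * (((m'+1).choose j : ℤ) * j) * (j : ℤ) ^ k := by ring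
        _ = ((-1:ℤ)) ^ (m' + 1 - j)
              * (((m':ℤ)+1) * ((m'+1).choose j) - ((m':ℤ)+1) * (m'.choose j)) * (j : ℤ) ^ k := by
            rw [hc]
        _ = _ := by ring
    rw [Finset.sum_congr rfl step1, Finset.sum_sub_distrib, ← Finset.mul_sum, ← Finset.mul_sum]
    have hB : ∑ j ∈ range (m' + 2), ((-1:ℤ)) ^ (m' + 1 - j) * (m'.choose j) * (j:ℤ)^k
        = - ∑ j ∈ range (m' + 1), ((-1:ℤ)) ^ (m' - j) * (m'.choose j) * (j:ℤ)^k := by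
      rw [Finset.sum_range_succ, Nat.choose_succ_self m']
      simp only [Nat.cast_zero, mul_zero, zero_mul, add_zero]
      rw [← Finset.sum_neg_distrib]
      apply Finset.sum_congr rfl
      intro j hj
      rw [Finset.mem_range] at hj
      have : m' + 1 - j = (m' - j) + 1 := by omega
      rw [this, pow_succ]
      ring
    rw [hB, ← ih m', ← ih (m'+1)]
    show ((m'+1)! : ℤ) * ((m' + 1) * stirling2 k (m'+1) + stirling2 k m' : ℕ) = _
    push_cast [Nat.factorial_succ]
    ring


section sieve
variable (p v : ℕ) [Fact p.Prime]

lemma isUnit_of_castHom_ne (hv : 0 < v) (x : ZMod (p^v)) (hx : (ZMod.castHom (dvd_pow_self p hv.ne') (ZMod p)) x ≠ 0) :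
    IsUnit x := by
  haveI : NeZero (p^v) := ⟨pow_ne_zero v (Fact.out : p.Prime).pos.ne'⟩
  have hval : ((x.val : ℕ) : ZMod (p^v)) = x := ZMod.natCast_rightInverse x
  rw [← hval] at hx ⊢
  rw [ZMod.isUnit_iff_coprime]
  rw [map_natCast] at hx
  have hnd : ¬ p ∣ x.val := by
    intro h
    exact hx ((ZMod.natCast_eq_zero_iff _ _).mpr h)
  exact (((Fact.out : p.Prime).coprime_iff_not_dvd.mpr hnd).symm).pow_right v

lemma exists_good_unit (hv : 0 < v) :
    ∃ g : (ZMod (p^v))ˣ, (∀ t : ℤ, ((p:ℤ) - 1) ∣ t → g ^ t = 1) ∧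
      (∀ t : ℤ, ¬ ((p:ℤ) - 1) ∣ t → IsUnit ((↑(g ^ t) : ZMod (p^v)) - 1)) := by
  haveI : NeZero (p^v) := ⟨pow_ne_zero v (Fact.out : p.Prime).pos.ne'⟩
  have hp : p.Prime := Fact.out
  obtain ⟨γ₀, hγ₀⟩ := IsCyclic.exists_generator (α := (ZMod p)ˣ)
  have hord₀ : orderOf γ₀ = p - 1 := by
    rw [orderOf_eq_card_of_forall_mem_zpowers hγ₀, Nat.card_eq_fintype_card, ZMod.card_units p]
  -- lift γ₀ to a unit of ZMod (p^v)
  set π : ZMod (p^v) →+* ZMod p := ZMod.castHom (dvd_pow_self p hv.ne') (ZMod p) with hπ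
  set x : ZMod (p^v) := (((γ₀ : ZMod p).val : ℕ) : ZMod (p^v)) with hxdef
  have hx : π x = (γ₀ : ZMod p) := by
    rw [hxdef, map_natCast, ZMod.natCast_rightInverse]
  have hxu : IsUnit x := by
    apply isUnit_of_castHom_ne p v hv
    rw [hx]; exact γ₀.ne_zero
  set γ : (ZMod (p^v))ˣ := hxu.unit with hγdef
  set Pu : (ZMod (p^v))ˣ →* (ZMod p)ˣ := Units.map (π : ZMod (p^v) →* ZMod p) with hPu
  have hPuγ : Pu γ = γ₀ := by
    ext
    show π (↑γ) = _
    rw [hγdef]; rw [IsUnit.unit_spec]; exact hx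
  set g : (ZMod (p^v))ˣ := γ ^ (p^(v-1)) with hgdef
  have hcard : Fintype.card (ZMod (p^v))ˣ = p^(v-1) * (p-1) := by
    rw [ZMod.card_units_eq_totient, Nat.totient_prime_pow hp hv]
  have hg1 : g ^ (p - 1) = 1 := by
    rw [hgdef, ← pow_mul, ← hcard, pow_card_eq_one]
  have hPug : Pu g = γ₀ ^ (p^(v-1)) := by rw [hgdef, map_pow, hPuγ]
  have hordδ : orderOf (γ₀ ^ (p^(v-1))) = p - 1 := by
    rw [orderOf_pow, hord₀]
    have hcop : Nat.Coprime (p-1) (p^(v-1)) :=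
      ((hp.coprime_iff_not_dvd.mpr (by
        have h2 := hp.two_le
        intro h
        have := Nat.le_of_dvd (by omega) h
        omega)).symm).pow_right _
    rw [hcop.gcd_eq_one, Nat.div_one]
  have hcast : ((p:ℤ) - 1) = ((p - 1 : ℕ) : ℤ) := by
    have := hp.pos; push_cast [Nat.cast_sub this]; ring
  refine ⟨g, ?_, ?_⟩
  · intro t ⟨s, hs⟩
    rw [hcast] at hs
    rw [hs, zpow_mul, zpow_natCast, hg1, one_zpow]
  · intro t ht
    apply isUnit_of_castHom_ne p v hv
    rw [map_sub, map_one]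
    intro h0
    have h1 : π ↑(g ^ t) = 1 := by
      rwa [sub_eq_zero] at h0
    have h2 : (Pu (g ^ t) : ZMod p) = 1 := h1
    have h3 : Pu (g ^ t) = 1 := Units.ext h2
    rw [map_zpow, hPug] at h3
    have h4 : ((p - 1 : ℕ) : ℤ) ∣ t := by
      rw [← hordδ]
      exact orderOf_dvd_iff_zpow_eq_one.mpr h3
    rw [hcast] at ht
    exact ht h4

lemma orth (g : (ZMod (p^v))ˣ) (h1 : ∀ t : ℤ, ((p:ℤ) - 1) ∣ t → g ^ t = 1)
    (h2 : ∀ t : ℤ, ¬ ((p:ℤ) - 1) ∣ t → IsUnit ((↑(g ^ t) : ZMod (p^v)) - 1)) (t : ℤ) :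
    ∑ i ∈ range (p - 1), ((↑(g ^ t) : ZMod (p^v))) ^ i
      = if ((p:ℤ) - 1) ∣ t then ((p - 1 : ℕ) : ZMod (p^v)) else 0 := by
  split_ifs with hd
  · rw [h1 t hd]
    simp
  · have hc : ((↑(g ^ t) : ZMod (p^v))) ^ (p - 1) = 1 := by
      rw [← Units.val_pow_eq_pow_val, ← zpow_natCast (g ^ t) (p-1), ← zpow_mul]
      have : g ^ (t * ((p-1:ℕ):ℤ)) = 1 := h1 _ (by
        refine Dvd.dvd.mul_left ?_ t
        have hp2 := (Fact.out : p.Prime).two_le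
        have : ((p:ℤ) - 1) = ((p - 1 : ℕ) : ℤ) := by push_cast [Nat.cast_sub]; ring; omega
        rw [this])
      rw [this, Units.val_one]
    have h0 := geom_sum_mul ((↑(g ^ t) : ZMod (p^v))) (p - 1)
    rw [hc, sub_self] at h0
    exact ((h2 t hd).mul_left_eq_zero).mp h0

end sieve

lemma prod_range_add_eq_asc (c n : ℕ) : ∏ i ∈ Finset.range n, (c + i) = c.ascFactorial n := by
  induction n with
  | zero => rfl
  | succ n ih => rw [Finset.prod_range_succ, ih, Nat.ascFactorial_succ, mul_comm]

lemma prod_range_cast_eq_zero (M n : ℕ) [NeZero M] (hd : M ∣ n !) (y : ZMod M) :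
    ∏ i ∈ Finset.range n, (y + (i : ZMod M)) = 0 := by
  have hval : ((y.val : ℕ) : ZMod M) = y := ZMod.natCast_rightInverse y
  have h1 : ∏ i ∈ Finset.range n, (y + (i : ZMod M))
      = ((∏ i ∈ Finset.range n, (y.val + i) : ℕ) : ZMod M) := by
    rw [Nat.cast_prod]
    exact Finset.prod_congr rfl fun i _ => by rw [Nat.cast_add, hval]
  rw [h1]
  have hdvd : M ∣ ∏ i ∈ Finset.range n, (y.val + i) := by
    rw [prod_range_add_eq_asc]
    exact hd.trans (Nat.factorial_dvd_ascFactorial _ _)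
  exact (ZMod.natCast_eq_zero_iff _ _).mpr hdvd

lemma key_dvd (p : ℕ) (hp : p.Prime) (n : ℕ) (r x : ℤ) :
    (p : ℤ) ^ (padicValNat p (n !)) ∣
      ∑ k ∈ Finset.range (n + 1),
        if ((p : ℤ) - 1) ∣ (k : ℤ) - r then (stirling1 n k : ℤ) * x ^ k else 0 := by
  haveI : Fact p.Prime := ⟨hp⟩
  set v := padicValNat p (n !) with hvdef
  rcases Nat.eq_zero_or_pos v with hv0 | hv
  · rw [hv0, pow_zero]; exact one_dvd _
  haveI : NeZero (p ^ v) := ⟨pow_ne_zero v hp.pos.ne'⟩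
  obtain ⟨g, h1, h2⟩ := exists_good_unit p v hv
  set T : ℤ := ∑ k ∈ Finset.range (n + 1),
      if ((p : ℤ) - 1) ∣ (k : ℤ) - r then (stirling1 n k : ℤ) * x ^ k else 0 with hTdef
  have hterm : ∀ (i k : ℕ), ((↑(g ^ (-r)) : ZMod (p^v)))^i
        * ((stirling1 n k : ZMod (p^v)) * ((↑g : ZMod (p^v))^i * (x : ZMod (p^v)))^k)
      = (stirling1 n k : ZMod (p^v)) * (x : ZMod (p^v))^k
        * ((↑(g ^ ((k:ℤ) - r)) : ZMod (p^v)))^i := by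
    intro i k
    have hu : g ^ ((k:ℤ) - r) = g ^ (-r) * g ^ k := by
      rw [← zpow_natCast g k, ← zpow_add]
      congr 1
      ring
    rw [hu, Units.val_mul, Units.val_pow_eq_pow_val]
    ring
  have hexp2 : ∑ i ∈ range (p - 1), ((↑(g ^ (-r)) : ZMod (p^v)))^i
        * ∏ j ∈ range n, ((↑g : ZMod (p^v))^i * (x : ZMod (p^v)) + (j : ZMod (p^v)))
      = ((p - 1 : ℕ) : ZMod (p^v)) * ∑ k ∈ range (n + 1),
          (if ((p:ℤ) - 1) ∣ (k:ℤ) - r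
            then (stirling1 n k : ZMod (p^v)) * (x : ZMod (p^v))^k else 0) := by
    calc ∑ i ∈ range (p - 1), ((↑(g ^ (-r)) : ZMod (p^v)))^i
          * ∏ j ∈ range n, ((↑g : ZMod (p^v))^i * (x : ZMod (p^v)) + (j : ZMod (p^v)))
        = ∑ i ∈ range (p - 1), ∑ k ∈ range (n + 1),
            (stirling1 n k : ZMod (p^v)) * (x : ZMod (p^v))^k
              * ((↑(g ^ ((k:ℤ) - r)) : ZMod (p^v)))^i := by
          refine Finset.sum_congr rfl fun i _ => ?_
          rw [prod_eq_stirling1_sum, Finset.mul_sum]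
          exact Finset.sum_congr rfl fun k _ => hterm i k
      _ = ∑ k ∈ range (n + 1), ∑ i ∈ range (p - 1),
            (stirling1 n k : ZMod (p^v)) * (x : ZMod (p^v))^k
              * ((↑(g ^ ((k:ℤ) - r)) : ZMod (p^v)))^i := Finset.sum_comm
      _ = ∑ k ∈ range (n + 1), (stirling1 n k : ZMod (p^v)) * (x : ZMod (p^v))^k
            * (if ((p:ℤ) - 1) ∣ (k:ℤ) - r then ((p - 1 : ℕ) : ZMod (p^v)) else 0) := by
          refine Finset.sum_congr rfl fun k _ => ?_
          rw [← Finset.mul_sum, orth p v g h1 h2]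
      _ = _ := by
          rw [Finset.mul_sum]
          refine Finset.sum_congr rfl fun k _ => ?_
          split_ifs <;> ring
  have hzero : ((p - 1 : ℕ) : ZMod (p^v)) * ∑ k ∈ range (n + 1),
      (if ((p:ℤ) - 1) ∣ (k:ℤ) - r
        then (stirling1 n k : ZMod (p^v)) * (x : ZMod (p^v))^k else 0) = 0 := by
    rw [← hexp2]
    refine Finset.sum_eq_zero fun i _ => ?_
    rw [prod_range_cast_eq_zero (p^v) n pow_padicValNat_dvd, mul_zero]
  have hTcast : ((T : ℤ) : ZMod (p^v)) = ∑ k ∈ range (n + 1),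
      (if ((p:ℤ) - 1) ∣ (k:ℤ) - r
        then (stirling1 n k : ZMod (p^v)) * (x : ZMod (p^v))^k else 0) := by
    rw [hTdef, Int.cast_sum]
    refine Finset.sum_congr rfl fun k _ => ?_
    split_ifs <;> push_cast <;> ring
  have hdvd1 : ((p ^ v : ℕ) : ℤ) ∣ ((p - 1 : ℕ) : ℤ) * T := by
    rw [← ZMod.intCast_zmod_eq_zero_iff_dvd]
    push_cast
    rw [hTcast] at *
    push_cast at hzero ⊢
    exact_mod_cast hzero
  have hcop : IsCoprime ((p : ℤ) ^ v) (((p - 1 : ℕ) : ℤ)) := by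
    rw [← Nat.cast_pow]
    rw [Nat.isCoprime_iff_coprime]
    exact ((hp.coprime_iff_not_dvd.mpr (by
      have h2 := hp.two_le
      intro h
      have := Nat.le_of_dvd (by omega) h
      omega)).pow_left v)
  refine hcop.dvd_of_dvd_mul_left ?_
  rw [← Nat.cast_pow] at *
  exact hdvd1

/-- For a prime `p`, positive integers `n, m` and arbitrary integers `a, r`,
`ord_p(Σ_{k ≡ r mod (p-1)} s(n,k) S(k,m) a^k) ≥ ord_p(n!) − ord_p(m!)`,
stated as a divisibility (trivially true if the right side is negative). -/
theorem ord_stirling_sum_mod_p_sub_one (p : ℕ) (hp : p.Prime) (n m : ℕ)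
    (hn : 0 < n) (hm : 0 < m) (a r : ℤ) :
    (p : ℤ) ^ (((padicValNat p (n !) : ℤ) - (padicValNat p (m !) : ℤ)).toNat) ∣
      ∑ k ∈ Finset.range (n + 1),
        if ((p : ℤ) - 1) ∣ (k : ℤ) - r then
          (stirling1 n k : ℤ) * (stirling2 k m : ℤ) * a ^ k
        else 0 := by
  haveI : Fact p.Prime := ⟨hp⟩
  set v := padicValNat p (n !) with hvdef
  set w := padicValNat p (m !) with hwdef
  set S : ℤ := ∑ k ∈ Finset.range (n + 1),
      if ((p : ℤ) - 1) ∣ (k : ℤ) - r then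
        (stirling1 n k : ℤ) * (stirling2 k m : ℤ) * a ^ k
      else 0 with hSdef
  rcases le_or_gt v w with hle | hlt
  · have h0 : ((v : ℤ) - (w : ℤ)).toNat = 0 := by omega
    rw [h0, pow_zero]
    exact one_dvd _
  have htn : ((v : ℤ) - (w : ℤ)).toNat = v - w := by omega
  rw [htn]
  -- step 1 : p^v ∣ m! * S
  have hMS : (p : ℤ) ^ v ∣ (m ! : ℤ) * S := by
    have hexp : (m ! : ℤ) * S = ∑ j ∈ range (m + 1), (-1) ^ (m - j) * (m.choose j) *
        (∑ k ∈ Finset.range (n + 1),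
          if ((p : ℤ) - 1) ∣ (k : ℤ) - r then (stirling1 n k : ℤ) * ((j : ℤ) * a) ^ k else 0) := by
      rw [hSdef, Finset.mul_sum]
      have hswap : ∀ k ∈ Finset.range (n + 1),
          (m ! : ℤ) * (if ((p : ℤ) - 1) ∣ (k : ℤ) - r then
            (stirling1 n k : ℤ) * (stirling2 k m : ℤ) * a ^ k else 0)
          = ∑ j ∈ range (m + 1), (-1) ^ (m - j) * (m.choose j) *
              (if ((p : ℤ) - 1) ∣ (k : ℤ) - r then (stirling1 n k : ℤ) * ((j : ℤ) * a) ^ k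
               else 0) := by
        intro k _
        split_ifs with hc
        · have : (m ! : ℤ) * ((stirling1 n k : ℤ) * (stirling2 k m : ℤ) * a ^ k)
              = (stirling1 n k : ℤ) * ((m ! : ℤ) * (stirling2 k m : ℤ)) * a ^ k := by ring
          rw [this, factorial_mul_stirling2, Finset.mul_sum, Finset.sum_mul]
          refine Finset.sum_congr rfl fun j _ => ?_
          rw [mul_pow]
          ring
        · simp
      rw [Finset.sum_congr rfl hswap, Finset.sum_comm]
      refine Finset.sum_congr rfl fun j _ => ?_
      rw [Finset.mul_sum]
    rw [hexp]
    refine Finset.dvd_sum fun j _ => ?_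
    exact Dvd.dvd.mul_left (key_dvd p hp n r ((j : ℤ) * a)) _
  -- step 2 : strip p^w from m!
  obtain ⟨c, hc⟩ : p ^ w ∣ m ! := pow_padicValNat_dvd
  have hpc : ¬ p ∣ c := by
    intro hdvd
    have h1 : p ^ (w + 1) ∣ m ! := by
      obtain ⟨d, hd⟩ := hdvd
      exact ⟨d, by rw [hc, hd, pow_succ]; ring⟩
    exact pow_succ_padicValNat_not_dvd (Nat.factorial_ne_zero m) h1
  have hsplit : (p : ℤ) ^ v = (p : ℤ) ^ w * (p : ℤ) ^ (v - w) := by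
    rw [← pow_add]
    congr 1
    omega
  rw [hc] at hMS
  push_cast at hMS
  rw [hsplit] at hMS
  have hMS2 : (p : ℤ) ^ (v - w) ∣ (c : ℤ) * S := by
    have hne : ((p : ℤ) ^ w) ≠ 0 := pow_ne_zero _ (by exact_mod_cast hp.pos.ne')
    have : (p:ℤ) ^ w * ((p:ℤ) ^ (v - w)) ∣ (p:ℤ) ^ w * ((c : ℤ) * S) := by
      calc (p:ℤ) ^ w * ((p:ℤ) ^ (v - w)) ∣ (p:ℤ) ^ w * (c : ℤ) * S := hMS
        _ = (p:ℤ) ^ w * ((c : ℤ) * S) := by ring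
    exact (mul_dvd_mul_iff_left hne).mp this
  have hcop : IsCoprime ((p : ℤ) ^ (v - w)) ((c : ℕ) : ℤ) := by
    rw [← Nat.cast_pow, Nat.isCoprime_iff_coprime]
    exact (hp.coprime_iff_not_dvd.mpr hpc).pow_left _
  exact hcop.dvd_of_dvd_mul_left hMS2
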